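/- arXiv:1903.00874 — 3 statements merged into one kernel-verified Lean document; each statement's English description precedes it below -/
import Mathlib

section
/- Let (R, m) be a Noetherian local ring whose punctured spectrum Spec(R) \ {m} is disconnected (as a topological space with the Zariski topology). Then depth(R) = depth(m, R) ≤ 1. -/
/-!
Let `x, y` be a regular sequence in `m`, and suppose the punctured spectrum splits as
`V(I) ⊔ V(J)` with both pieces nonempty. As `R` is Noetherian we may take `IJ = 0`, while
`I + J` is still `m`-primary. Write `x^M = A + B` and `y^N = C + D` with `A, C ∈ I` and
`B, D ∈ J`; all cross products vanish, so `y^N A = A C = x^M C`. Since `y^N` is regular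
modulo `x^M`, `A = x^M e`, and `A² = x^M A` makes `e` idempotent, hence `0` or `1` as `R` is
local. Thus `x^M` lies in `J` or in `I`, and being a nonzerodivisor it kills the other ideal
against `IJ = 0`, contradicting the nonemptiness of the two pieces.
-/

open scoped Classical

/-- The depth of the `R`-module `M` along the ideal `I`: the supremum of lengths of
`M`-regular sequences contained in `I`, with the convention that it is `⊤` if `IM = M`. -/
noncomputable def Ideal.depthENat {R : Type*} [CommRing R] (I : Ideal R)
    (M : Type*) [AddCommGroup M] [Module R M] : ℕ∞ :=
  if I • (⊤ : Submodule R M) = ⊤ then ⊤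
  else sSup {n : ℕ∞ | ∃ rs : List R, (∀ r ∈ rs, r ∈ I) ∧
      RingTheory.Sequence.IsRegular M rs ∧ (rs.length : ℕ∞) = n}

/-- The height of an ideal: the infimum of the heights of the primes minimal over it. -/
noncomputable def Ideal.heightENat {R : Type*} [CommRing R] (I : Ideal R) : ℕ∞ :=
  sInf {n : ℕ∞ | ∃ p : PrimeSpectrum R, p.asIdeal ∈ I.minimalPrimes ∧ Order.height p = n}

open IsLocalRing RingTheory.Sequence

section

variable {R : Type*} [CommRing R]

lemma Ideal.depthENat_le_one {M : Type*} [AddCommGroup M] [Module R M] {I : Ideal R}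
    (hI : I • (⊤ : Submodule R M) ≠ ⊤) (h : ∀ x ∈ I, ∀ y ∈ I, ¬ IsWeaklyRegular M [x, y]) :
    I.depthENat M ≤ 1 := by
  rw [Ideal.depthENat, if_neg hI]
  refine sSup_le ?_
  rintro _ ⟨rs, hrs, hreg, rfl⟩
  match rs, hrs, hreg with
  | [], _, _ => simp
  | [_], _, _ => simp
  | x :: y :: rest, hrs, hreg =>
    exact absurd ((isWeaklyRegular_append_iff M [x, y] rest).mp hreg.toIsWeaklyRegular).1
      (h x (hrs x (by simp)) y (hrs y (by simp)))

lemma dvd_of_dvd_pow_mul {s y : R} (h : ∀ a, s ∣ y * a → s ∣ a) (j : ℕ) {a : R}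
    (hs : s ∣ y ^ j * a) : s ∣ a := by
  induction j generalizing a with
  | zero => simpa using hs
  | succ j ih => exact h _ (ih (by rwa [pow_succ, mul_assoc] at hs))

lemma pow_dvd_of_pow_dvd_mul {x y : R} (hx : IsLeftRegular x) (h : ∀ a, x ∣ y * a → x ∣ a)
    (i : ℕ) {a : R} (hxa : x ^ i ∣ y * a) : x ^ i ∣ a := by
  induction i generalizing a with
  | zero => simp
  | succ i ih =>
    obtain ⟨b, rfl⟩ := h a (dvd_trans (dvd_pow_self x i.succ_ne_zero) hxa)
    rw [pow_succ', mul_left_comm] at hxa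
    exact pow_succ' x i ▸ mul_dvd_mul_left x (ih (hx.dvd_cancel_left.mp hxa))

lemma RingTheory.Sequence.IsWeaklyRegular.dvd_of_dvd_mul {x y : R}
    (hxy : IsWeaklyRegular R [x, y]) {a : R} (hxa : x ∣ y * a) : x ∣ a := by
  have hy := ((isWeaklyRegular_cons_iff R x [y]).mp hxy).2
  rw [isWeaklyRegular_singleton_iff] at hy
  have mk_eq_zero_iff (b : R) : (Submodule.Quotient.mk b : QuotSMulTop x R) = 0 ↔ x ∣ b := by
    rw [Submodule.Quotient.mk_eq_zero, Submodule.mem_smul_pointwise_iff_exists]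
    simp [dvd_def, eq_comm]
  rw [← mk_eq_zero_iff] at hxa ⊢
  exact hy (show y • _ = y • _ by rwa [smul_zero, ← Submodule.Quotient.mk_smul])

lemma IsLocalRing.eq_zero_or_eq_one_of_isIdempotentElem [IsLocalRing R] {e : R}
    (he : IsIdempotentElem e) : e = 0 ∨ e = 1 := by
  rcases isUnit_or_isUnit_one_sub_self e with hu | hu
  · exact .inr (hu.mul_left_cancel (by rw [he.eq, mul_one]))
  · exact .inl (hu.mul_left_cancel (by rw [he.one_sub_mul_self, mul_zero]))

lemma Ideal.eq_bot_of_mul_eq_bot_of_mem {I J : Ideal R} (hIJ : I * J = ⊥) {s : R}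
    (hs : IsLeftRegular s) (hsJ : s ∈ J) : I = ⊥ := by
  refine (Submodule.eq_bot_iff I).mpr fun z hz => hs.mul_left_eq_zero_iff.mp ?_
  simpa [hIJ, mul_comm] using Ideal.mul_mem_mul hz hsJ

lemma Ideal.mem_or_mem_of_mul_eq_bot [IsLocalRing R] {I J : Ideal R} (hIJ : I * J = ⊥)
    {s t : R} (hs : IsLeftRegular s) (hst : ∀ a, s ∣ t * a → s ∣ a)
    (hsIJ : s ∈ I ⊔ J) (htIJ : t ∈ I ⊔ J) : s ∈ I ∨ s ∈ J := by
  have cross {a b : R} (ha : a ∈ I) (hb : b ∈ J) : a * b = 0 := by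
    simpa [hIJ] using Ideal.mul_mem_mul ha hb
  obtain ⟨A, hA, B, hB, rfl⟩ := Submodule.mem_sup.mp hsIJ
  obtain ⟨C, hC, D, hD, rfl⟩ := Submodule.mem_sup.mp htIJ
  -- `A / s` on `D(s)` and `C / t` on `D(t)` glue to an idempotent `e` of `R`
  obtain ⟨e, hAe⟩ : A + B ∣ A :=
    hst A ⟨C, by linear_combination cross hA hD - cross hC hB⟩
  have he : IsIdempotentElem e := (hs.mul hs).eq_iff.mp <| by
    linear_combination (B - (A + B) * e) * hAe - cross hA hB
  rcases IsLocalRing.eq_zero_or_eq_one_of_isIdempotentElem he with rfl | rfl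
  · rw [mul_zero] at hAe
    exact .inr (by rwa [hAe, zero_add])
  · rw [mul_one] at hAe
    exact .inl (hAe ▸ hA)

lemma Ideal.eq_bot_or_eq_bot_of_isWeaklyRegular [IsLocalRing R] {x y : R}
    (hxy : IsWeaklyRegular R [x, y]) {I J : Ideal R} (hIJ : I * J = ⊥)
    (hx : x ∈ (I ⊔ J).radical) (hy : y ∈ (I ⊔ J).radical) : I = ⊥ ∨ J = ⊥ := by
  have hx_reg : IsLeftRegular x := ((isWeaklyRegular_cons_iff R x [y]).mp hxy).1.isLeftRegular
  obtain ⟨M, hM⟩ := hx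
  obtain ⟨N, hN⟩ := hy
  have hdvd (a : R) : x ^ M ∣ y ^ N * a → x ^ M ∣ a :=
    dvd_of_dvd_pow_mul (fun _ => pow_dvd_of_pow_dvd_mul hx_reg (fun _ => hxy.dvd_of_dvd_mul) M) N
  rcases mem_or_mem_of_mul_eq_bot hIJ (hx_reg.pow M) hdvd hM hN with hMI | hMJ
  · exact .inr (eq_bot_of_mul_eq_bot_of_mem (mul_comm I J ▸ hIJ) (hx_reg.pow M) hMI)
  · exact .inl (eq_bot_of_mul_eq_bot_of_mem hIJ (hx_reg.pow M) hMJ)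

lemma Ideal.exists_pow_mul_pow_eq_bot [IsNoetherianRing R] {I J : Ideal R}
    (hIJ : I * J ≤ nilradical R) : ∃ n ≠ 0, I ^ n * J ^ n = ⊥ := by
  obtain ⟨n, hn⟩ := IsNoetherianRing.isNilpotent_nilradical R
  refine ⟨n + 1, n.succ_ne_zero, le_bot_iff.mp ?_⟩
  calc I ^ (n + 1) * J ^ (n + 1) = (I * J) ^ (n + 1) := (mul_pow I J _).symm
    _ ≤ nilradical R ^ (n + 1) := Ideal.pow_right_mono hIJ _
    _ = ⊥ := by rw [pow_succ, hn, zero_mul]; rfl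

lemma PrimeSpectrum.exists_ideal_of_isClosed {P : PrimeSpectrum R → Prop} {u : Set (Subtype P)}
    (hu : IsClosed u) : ∃ I : Ideal R, ∀ p : Subtype P, p ∈ u ↔ I ≤ p.1.asIdeal := by
  obtain ⟨Z, hZ, rfl⟩ := isClosed_induced_iff.mp hu
  obtain ⟨I, rfl⟩ := (isClosed_iff_zeroLocus_ideal Z).mp hZ
  exact ⟨I, fun p => mem_zeroLocus _ _⟩

lemma IsLocalRing.exists_ideals_of_not_connectedSpace [IsLocalRing R]
    (hdisc : ¬ ConnectedSpace {p : PrimeSpectrum R // p ≠ closedPoint R})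
    [hne : Nonempty {p : PrimeSpectrum R // p ≠ closedPoint R}] :
    ∃ I J : Ideal R, I * J ≤ nilradical R ∧ maximalIdeal R ≤ (I ⊔ J).radical ∧
      ¬ I ≤ nilradical R ∧ ¬ J ≤ nilradical R := by
  obtain ⟨u, hu, ⟨p, hp⟩, hu_ne_univ⟩ : ∃ u, IsClopen u ∧ u.Nonempty ∧ u ≠ Set.univ := by
    simpa [connectedSpace_iff_clopen, hne, Set.nonempty_iff_ne_empty] using hdisc
  obtain ⟨q, hq⟩ := (Set.ne_univ_iff_exists_notMem u).mp hu_ne_univ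
  obtain ⟨I, hI⟩ := PrimeSpectrum.exists_ideal_of_isClosed hu.isClosed
  obtain ⟨J, hJ⟩ := PrimeSpectrum.exists_ideal_of_isClosed hu.isOpen.isClosed_compl
  have cover (P : PrimeSpectrum R) : I ≤ P.asIdeal ∨ J ≤ P.asIdeal := by
    by_cases hP : P = closedPoint R
    · exact .inl (hP ▸ ((hI p).mp hp).trans (le_maximalIdeal p.1.2.ne_top))
    · by_cases hPu : ⟨P, hP⟩ ∈ u
      · exact .inl ((hI _).mp hPu)
      · exact .inr ((hJ _).mp hPu)
  have eq_closedPoint (P : PrimeSpectrum R) (hIP : I ≤ P.asIdeal) (hJP : J ≤ P.asIdeal) :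
      P = closedPoint R := by
    by_contra hP
    exact (hJ ⟨P, hP⟩).mpr hJP ((hI ⟨P, hP⟩).mpr hIP)
  refine ⟨I, J, ?_, ?_, ?_, ?_⟩
  · rw [← PrimeSpectrum.vanishingIdeal_univ]
    intro z hz
    rw [PrimeSpectrum.mem_vanishingIdeal]
    intro P _
    rcases cover P with hIP | hJP
    · exact (Ideal.mul_le_left.trans hIP) hz
    · exact (Ideal.mul_le_right.trans hJP) hz
  · rw [← PrimeSpectrum.vanishingIdeal_zeroLocus_eq_radical]
    intro z hz
    rw [PrimeSpectrum.mem_vanishingIdeal]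
    intro P hP
    rw [PrimeSpectrum.zeroLocus_sup, Set.mem_inter_iff, PrimeSpectrum.mem_zeroLocus,
      PrimeSpectrum.mem_zeroLocus] at hP
    rwa [eq_closedPoint P hP.1 hP.2]
  · exact fun h => hq ((hI q).mpr (h.trans (nilradical_le_prime _)))
  · exact fun h => (hJ p).mpr (h.trans (nilradical_le_prime _)) hp

lemma IsLocalRing.exists_mul_eq_bot_of_not_connectedSpace [IsNoetherianRing R] [IsLocalRing R]
    (hdisc : ¬ ConnectedSpace {p : PrimeSpectrum R // p ≠ closedPoint R})
    [Nonempty {p : PrimeSpectrum R // p ≠ closedPoint R}] :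
    ∃ I J : Ideal R, I * J = ⊥ ∧ maximalIdeal R ≤ (I ⊔ J).radical ∧ I ≠ ⊥ ∧ J ≠ ⊥ := by
  obtain ⟨I, J, hIJ, hm, hI, hJ⟩ := exists_ideals_of_not_connectedSpace hdisc
  obtain ⟨n, hn, hIJn⟩ := Ideal.exists_pow_mul_pow_eq_bot hIJ
  have le_nilradical_of_pow_eq_bot {K : Ideal R} (hK : K ^ n = ⊥) : K ≤ nilradical R :=
    Ideal.le_radical.trans_eq (by rw [← Ideal.radical_pow K hn, hK]; rfl)
  refine ⟨I ^ n, J ^ n, hIJn, ?_, fun h => hI (le_nilradical_of_pow_eq_bot h),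
    fun h => hJ (le_nilradical_of_pow_eq_bot h)⟩
  rwa [Ideal.radical_sup, Ideal.radical_pow _ hn, Ideal.radical_pow _ hn, ← Ideal.radical_sup]

lemma IsLocalRing.nonempty_punctured_of_isLeftRegular [IsLocalRing R] {x : R}
    (hx : x ∈ maximalIdeal R) (hreg : IsLeftRegular x) :
    Nonempty {p : PrimeSpectrum R // p ≠ closedPoint R} := by
  have hnil : ¬ IsNilpotent x := fun ⟨n, hn⟩ => not_isLeftRegular_zero (hn ▸ hreg.pow n)
  rw [← mem_nilradical, ← PrimeSpectrum.vanishingIdeal_univ, PrimeSpectrum.mem_vanishingIdeal]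
    at hnil
  push Not at hnil
  obtain ⟨p, -, hxp⟩ := hnil
  exact ⟨⟨p, fun h => hxp (h ▸ hx)⟩⟩

end

/-- If the punctured spectrum of a Noetherian local ring is disconnected,
then `depth R = depth(m, R) ≤ 1`. -/
theorem depth_le_one_of_disconnected_punctured_spectrum
    {R : Type u} [CommRing R] [IsNoetherianRing R] [IsLocalRing R]
    (hdisc : ¬ ConnectedSpace {p : PrimeSpectrum R // p ≠ IsLocalRing.closedPoint R}) :
    (IsLocalRing.maximalIdeal R).depthENat R ≤ 1 := by
  refine Ideal.depthENat_le_one ?_ fun x hx y hy hxy => ?_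
  · rw [smul_eq_mul, Ideal.mul_top]
    exact (maximalIdeal.isMaximal R).ne_top
  have hx_reg := ((isWeaklyRegular_cons_iff R x [y]).mp hxy).1.isLeftRegular
  have := nonempty_punctured_of_isLeftRegular hx hx_reg
  obtain ⟨I, J, hIJ, hm, hI, hJ⟩ := exists_mul_eq_bot_of_not_connectedSpace hdisc
  exact (Ideal.eq_bot_or_eq_bot_of_isWeaklyRegular hxy hIJ (hm hx) (hm hy)).elim hI hJ
end

section
/- Let R be a commutative Noetherian ring that is indecomposable as a module over itself, and let I, J ⊊ R be proper ideals such that √(I ∩ J) = √0 (the nilradical), but √I ≠ √0 and √J ≠ √0. Then depth(I + J, R) ≤ 1. -/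
open scoped Classical

/-!
Since `√(I ∩ J) = √0` and `R` is Noetherian, `Iⁿ Jⁿ = 0` for some `n ≠ 0`, and `Iⁿ + Jⁿ` has the
same radical as `I + J`. Powers of a regular sequence `a, b` in `I + J` are again regular, so we
may take `a, b ∈ Iⁿ + Jⁿ`. Write `a = α + β`, `b = γ + δ` with `α, γ ∈ Iⁿ` and `β, δ ∈ Jⁿ`. Then
`b α = γ a`, so regularity of `b` modulo `a` gives `α = s a`, and likewise `β = t a`. As `a` is a
nonzerodivisor, `s + t = 1` and `s t = 0`, so `s` is idempotent, hence `0` or `1` since `R` is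
indecomposable. Then `a` lies in `Jⁿ` or in `Iⁿ`, and kills the other ideal, which is therefore
zero; this contradicts `√I ≠ √0`, `√J ≠ √0`.
-/

open RingTheory.Sequence
open scoped Pointwise

section

variable {R : Type*} [CommRing R]

theorem eq_zero_or_eq_one_of_isIdempotentElem
    (hind : ∀ A B : Submodule R R, IsCompl A B → A = ⊥ ∨ B = ⊥)
    {e : R} (he : IsIdempotentElem e) : e = 0 ∨ e = 1 := by
  have hmul : IsIdempotentElem (LinearMap.mulLeft R e) :=
    LinearMap.ext fun x ↦ by simp [Module.End.mul_apply, ← mul_assoc, he.eq]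
  rcases hind _ _ (LinearMap.IsIdempotentElem.isCompl hmul) with h | h
  · left
    simpa using LinearMap.congr_fun (LinearMap.range_eq_bot.mp h) (1 : R)
  · right
    exact LinearMap.ker_eq_bot.mp h (a₁ := e) (a₂ := 1) (by simp [he.eq])

theorem isSMulRegular_quotient_span_pow {a b : R} (ha : IsSMulRegular R a)
    (hb : IsSMulRegular (R ⧸ Ideal.span {a}) b) (m : ℕ) :
    IsSMulRegular (R ⧸ Ideal.span {a ^ m}) b := by
  rw [isSMulRegular_quotient_iff_mem_of_smul_mem] at hb ⊢
  simp only [smul_eq_mul, Ideal.mem_span_singleton'] at hb ⊢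
  induction m with
  | zero => simp
  | succ m ih =>
    rintro x ⟨y, hy⟩
    obtain ⟨z, rfl⟩ := hb x ⟨y * a ^ m, by rw [← hy]; ring⟩
    have hz : z * b = y * a ^ m := ha <| by
      simp only [smul_eq_mul]
      linear_combination -hy
    obtain ⟨w, rfl⟩ := ih z ⟨y, by linear_combination -hz⟩
    exact ⟨w, by ring⟩

theorem RingTheory.Sequence.isWeaklyRegular_pair_iff {a b : R} :
    IsWeaklyRegular R [a, b] ↔
      IsSMulRegular R a ∧ IsSMulRegular (R ⧸ Ideal.span {a}) b := by
  have hspan : a • (⊤ : Submodule R R) = Ideal.span {a} := by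
    rw [← Submodule.ideal_span_singleton_smul, smul_eq_mul, Ideal.mul_top]
  simp only [isWeaklyRegular_cons_iff, IsWeaklyRegular.nil, and_true, QuotSMulTop]
  rw [hspan]

theorem RingTheory.Sequence.IsWeaklyRegular.pow_pair {a b : R}
    (h : IsWeaklyRegular R [a, b]) (m n : ℕ) : IsWeaklyRegular R [a ^ m, b ^ n] := by
  rw [isWeaklyRegular_pair_iff] at h ⊢
  exact ⟨h.1.pow m, (isSMulRegular_quotient_span_pow h.1 h.2 m).pow n⟩

theorem Ideal.depthENat_le_one_of_forall_not_isWeaklyRegular {K : Ideal R}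
    (h : ∀ a ∈ K, ∀ b ∈ K, ¬IsWeaklyRegular R [a, b]) : K.depthENat R ≤ 1 := by
  have hK : K ≠ ⊤ := fun hK ↦
    h 1 (hK ▸ Submodule.mem_top) 1 (hK ▸ Submodule.mem_top) <| by
      simp [IsSMulRegular.one]
  rw [Ideal.depthENat, if_neg (by rwa [smul_eq_mul, Ideal.mul_top])]
  refine sSup_le ?_
  rintro _ ⟨rs, hmem, hreg, rfl⟩
  match rs, hmem, hreg with
  | [], _, _ => simp
  | [_], _, _ => simp
  | a :: b :: rest, hmem, hreg =>
    refine absurd ?_ (h a (hmem a (by simp)) b (hmem b (by simp)))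
    have hw := hreg.toIsWeaklyRegular
    simp only [isWeaklyRegular_cons_iff] at hw ⊢
    exact ⟨hw.1, hw.2.1, IsWeaklyRegular.nil _ _⟩

namespace Ideal

variable {A B : Ideal R}

theorem mul_eq_zero_of_mul_eq_bot (hAB : A * B = ⊥) {x y : R} (hx : x ∈ A) (hy : y ∈ B) :
    x * y = 0 := by
  simpa [hAB] using mul_mem_mul hx hy

theorem eq_bot_of_mul_eq_bot_of_mem_s1 (hAB : A * B = ⊥) {a : R} (ha : IsSMulRegular R a)
    (haB : a ∈ B) : A = ⊥ :=
  eq_bot_iff.mpr fun x hx ↦ mem_bot.mpr <| ha <| by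
    simpa [mul_comm a] using mul_eq_zero_of_mul_eq_bot hAB hx haB

theorem mem_span_singleton_add_of_mul_eq_bot (hAB : A * B = ⊥) {α β γ δ : R}
    (hα : α ∈ A) (hβ : β ∈ B) (hγ : γ ∈ A) (hδ : δ ∈ B)
    (hreg : IsSMulRegular (R ⧸ span {α + β}) (γ + δ)) : α ∈ span {α + β} := by
  refine mem_of_isSMulRegular_quotient_of_smul_mem hreg (mem_span_singleton'.mpr ⟨γ, ?_⟩)
  have hαδ := mul_eq_zero_of_mul_eq_bot hAB hα hδ
  have hγβ := mul_eq_zero_of_mul_eq_bot hAB hγ hβ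
  simp only [smul_eq_mul]
  linear_combination hγβ - hαδ

theorem eq_bot_or_eq_bot_of_mul_eq_bot
    (hind : ∀ A B : Submodule R R, IsCompl A B → A = ⊥ ∨ B = ⊥) (hAB : A * B = ⊥)
    {a b : R} (hreg : IsWeaklyRegular R [a, b]) (ha : a ∈ A ⊔ B) (hb : b ∈ A ⊔ B) :
    A = ⊥ ∨ B = ⊥ := by
  obtain ⟨haR, hbR⟩ := isWeaklyRegular_pair_iff.mp hreg
  obtain ⟨α, hα, β, hβ, rfl⟩ := Submodule.mem_sup.mp ha
  obtain ⟨γ, hγ, δ, hδ, rfl⟩ := Submodule.mem_sup.mp hb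
  have hBA : B * A = ⊥ := by rwa [mul_comm]
  obtain ⟨s, hs⟩ := mem_span_singleton'.mp
    (mem_span_singleton_add_of_mul_eq_bot hAB hα hβ hγ hδ hbR)
  obtain ⟨t, ht⟩ := mem_span_singleton'.mp <| add_comm α β ▸
    mem_span_singleton_add_of_mul_eq_bot hBA hβ hα hδ hγ (by rwa [add_comm β, add_comm δ])
  have hst : s + t = 1 := haR <| by
    simp only [smul_eq_mul]
    linear_combination hs + ht
  have hst0 : s * t = 0 := haR <| haR <| by
    simp only [smul_eq_mul, mul_zero]
    linear_combination t * (α + β) * hs + α * ht + mul_eq_zero_of_mul_eq_bot hAB hα hβ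
  have hidem : IsIdempotentElem s := show s * s = s by
    linear_combination s * hst - hst0
  rcases eq_zero_or_eq_one_of_isIdempotentElem hind hidem with rfl | rfl
  · left
    refine eq_bot_of_mul_eq_bot_of_mem_s1 hAB haR ?_
    rwa [← hs, zero_mul, zero_add]
  · right
    refine eq_bot_of_mul_eq_bot_of_mem_s1 hBA haR ?_
    obtain rfl : t = 0 := by linear_combination hst
    rwa [← ht, zero_mul, add_zero]

theorem exists_pow_mul_pow_eq_bot_s1 [IsNoetherianRing R] {I J : Ideal R}
    (h : (I ⊓ J).radical = (⊥ : Ideal R).radical) : ∃ n ≠ 0, I ^ n * J ^ n = ⊥ := by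
  obtain ⟨n, hn⟩ := exists_pow_le_of_le_radical_of_fg (I := I * J) (J := ⊥)
    (h ▸ mul_le_inf.trans le_radical) (IsNoetherian.noetherian _)
  refine ⟨n + 1, n.succ_ne_zero, ?_⟩
  rw [← mul_pow, eq_bot_iff]
  exact (pow_le_pow_right n.le_succ).trans hn

end Ideal

end

theorem depth_sup_le_one_of_radical_inf_eq_nilradical_general
    {R : Type u} [CommRing R] [IsNoetherianRing R]
    (hind : ∀ A B : Submodule R R, IsCompl A B → A = ⊥ ∨ B = ⊥)
    (I J : Ideal R)
    (hmeet : (I ⊓ J).radical = (⊥ : Ideal R).radical)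
    (hIr : I.radical ≠ (⊥ : Ideal R).radical)
    (hJr : J.radical ≠ (⊥ : Ideal R).radical) :
    (I ⊔ J).depthENat R ≤ 1 := by
  obtain ⟨n, hn, hmul⟩ := Ideal.exists_pow_mul_pow_eq_bot_s1 hmeet
  have hsup : I ⊔ J ≤ (I ^ n ⊔ J ^ n).radical := by
    rw [Ideal.radical_sup, Ideal.radical_pow _ hn, Ideal.radical_pow _ hn, ← Ideal.radical_sup]
    exact Ideal.le_radical
  refine Ideal.depthENat_le_one_of_forall_not_isWeaklyRegular fun a ha b hb hreg ↦ ?_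
  obtain ⟨k, hk⟩ := hsup ha
  obtain ⟨l, hl⟩ := hsup hb
  rcases Ideal.eq_bot_or_eq_bot_of_mul_eq_bot hind hmul (hreg.pow_pair k l) hk hl with h | h
  · exact hIr (by rw [← Ideal.radical_pow _ hn, h])
  · exact hJr (by rw [← Ideal.radical_pow _ hn, h])

/-- Kaplansky: if `R` is Noetherian and indecomposable as a module over itself and
`I, J` are proper ideals with `√(I ∩ J) = √0` but `√I, √J ≠ √0`, then
`depth(I + J, R) ≤ 1`. -/
theorem depth_sup_le_one_of_radical_inf_eq_nilradical
    {R : Type u} [CommRing R] [IsNoetherianRing R]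
    (hind : ∀ A B : Submodule R R, IsCompl A B → A = ⊥ ∨ B = ⊥)
    (I J : Ideal R) (hI : I ≠ ⊤) (hJ : J ≠ ⊤)
    (hmeet : (I ⊓ J).radical = (⊥ : Ideal R).radical)
    (hIr : I.radical ≠ (⊥ : Ideal R).radical)
    (hJr : J.radical ≠ (⊥ : Ideal R).radical) :
    (I ⊔ J).depthENat R ≤ 1 :=
  depth_sup_le_one_of_radical_inf_eq_nilradical_general hind I J hmeet hIr hJr
end

section
/- Let (R, m) be a Noetherian local ring, I, J ⊊ R proper ideals, and x₁, ..., x_h a regular sequence in R such that √(I ∩ J) = √((x₁,...,x_h)R), but √I ≠ √((x₁,...,x_h)R) and √J ≠ √((x₁,...,x_h)R). Then depth(I + J, R) ≤ h + 1. -/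
open scoped Classical

section Aux

open scoped Pointwise

variable {R : Type*} [CommRing R]

/-- `a` is a nonzerodivisor modulo the ideal `C`. -/
def NZDmod (C : Ideal R) (a : R) : Prop := ∀ t, a * t ∈ C → t ∈ C

lemma quot_smul_mk (C : Ideal R) (a t : R) :
    a • (Submodule.Quotient.mk t : R ⧸ C) = Submodule.Quotient.mk (a * t) := by
  rw [← Submodule.Quotient.mk_smul, smul_eq_mul]

lemma isSMulRegular_quot_iff (C : Ideal R) (a : R) :
    IsSMulRegular (R ⧸ C) a ↔ NZDmod C a := by
  constructor
  · intro h t ht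
    have h2 : a • (Submodule.Quotient.mk t : R ⧸ C) = a • (0 : R ⧸ C) := by
      rw [smul_zero, quot_smul_mk, Submodule.Quotient.mk_eq_zero]
      exact ht
    have := h h2
    rwa [Submodule.Quotient.mk_eq_zero] at this
  · intro h x y hxy
    obtain ⟨x, rfl⟩ := Submodule.Quotient.mk_surjective _ x
    obtain ⟨y, rfl⟩ := Submodule.Quotient.mk_surjective _ y
    have h2 : a • (Submodule.Quotient.mk x : R ⧸ C) = a • (Submodule.Quotient.mk y : R ⧸ C) := hxy
    rw [quot_smul_mk, quot_smul_mk, Submodule.Quotient.eq] at h2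
    rw [← mul_sub] at h2
    have := h _ h2
    exact (Submodule.Quotient.eq _).2 this

lemma smul_top_quot_eq_map (C : Ideal R) (a : R) :
    (a • (⊤ : Submodule R (R ⧸ C))) = Submodule.map C.mkQ ((C ⊔ Ideal.span {a}) : Ideal R) := by
  ext x
  rw [← SetLike.mem_coe, Submodule.coe_pointwise_smul, Set.mem_smul_set, Submodule.mem_map]
  simp only [SetLike.mem_coe]
  constructor
  · rintro ⟨s, -, rfl⟩
    obtain ⟨s, rfl⟩ := Submodule.Quotient.mk_surjective _ s
    refine ⟨a * s, Submodule.mem_sup_right (Ideal.mul_mem_right s _ (Ideal.subset_span rfl)), ?_⟩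
    show (Submodule.Quotient.mk (a*s) : R ⧸ C) = a • Submodule.Quotient.mk s
    rw [quot_smul_mk]
  · rintro ⟨s, hs, rfl⟩
    rw [Submodule.mem_sup] at hs
    obtain ⟨c, hc, z, hz, rfl⟩ := hs
    rw [Ideal.mem_span_singleton] at hz
    obtain ⟨t, rfl⟩ := hz
    refine ⟨Submodule.Quotient.mk t, trivial, ?_⟩
    show a • (Submodule.Quotient.mk t : R ⧸ C) = Submodule.Quotient.mk (c + a * t)
    rw [quot_smul_mk, Submodule.Quotient.eq]
    simpa using C.neg_mem hc

/-- The equivalence `(R⧸C)⧸a(R⧸C) ≃ R⧸(C + (a))`. -/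
noncomputable def quotQuotEquiv (C : Ideal R) (a : R) :
    QuotSMulTop a (R ⧸ C) ≃ₗ[R] R ⧸ (C ⊔ Ideal.span {a} : Ideal R) :=
  (Submodule.quotEquivOfEq _ _ (smul_top_quot_eq_map C a)) ≪≫ₗ
    Submodule.quotientQuotientEquivQuotient C _ le_sup_left

open RingTheory.Sequence IsLocalRing

/-- Weak regularity of a sequence modulo an ideal. -/
def WReg (C : Ideal R) (ls : List R) : Prop := IsWeaklyRegular (R ⧸ C) ls

lemma wreg_nil (C : Ideal R) : WReg C [] := IsWeaklyRegular.nil R _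

lemma wreg_cons_iff (C : Ideal R) (a : R) (ls : List R) :
    WReg C (a :: ls) ↔ NZDmod C a ∧ WReg (C ⊔ Ideal.span {a}) ls := by
  rw [WReg, isWeaklyRegular_cons_iff, isSMulRegular_quot_iff]
  exact and_congr_right fun _ => (quotQuotEquiv C a).isWeaklyRegular_congr ls

lemma wreg_bot_iff (ls : List R) : WReg (⊥ : Ideal R) ls ↔ IsWeaklyRegular R ls :=
  (Submodule.quotEquivOfEqBot _ rfl).isWeaklyRegular_congr ls

lemma mem_sup_span_iff (C : Ideal R) (x t : R) :
    t ∈ C ⊔ Ideal.span {x} ↔ ∃ s, t - x * s ∈ C := by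
  rw [Submodule.mem_sup]
  constructor
  · rintro ⟨c, hc, z, hz, rfl⟩
    rw [Ideal.mem_span_singleton] at hz
    obtain ⟨s, rfl⟩ := hz
    exact ⟨s, by simpa using hc⟩
  · rintro ⟨s, hs⟩
    exact ⟨t - x * s, hs, x * s, Ideal.mem_span_singleton.2 ⟨s, rfl⟩, by ring⟩

lemma wreg_append_iff (C : Ideal R) (l₁ l₂ : List R) :
    WReg C (l₁ ++ l₂) ↔ WReg C l₁ ∧ WReg (C ⊔ Ideal.ofList l₁) l₂ := by
  induction l₁ generalizing C with
  | nil =>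
    simp only [List.nil_append, wreg_nil, true_and]
    rw [Ideal.ofList_nil, sup_bot_eq]
  | cons a l ih =>
    rw [List.cons_append, wreg_cons_iff, ih, wreg_cons_iff, and_assoc,
      Ideal.ofList_cons, ← sup_assoc]

lemma WReg.perm [IsNoetherianRing R] [IsLocalRing R] {C : Ideal R} {l l' : List R}
    (h : WReg C l) (hp : l.Perm l') (hm : ∀ x ∈ l, x ∈ maximalIdeal R) : WReg C l' :=
  IsLocalRing.isWeaklyRegular_of_perm_of_subset_maximalIdeal h hp hm

lemma NZDmod.pow {C : Ideal R} {a : R} (h : NZDmod C a) (k : ℕ) : NZDmod C (a ^ k) := by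
  induction k with
  | zero => intro t ht; simpa using ht
  | succ k ih =>
    intro t ht
    rw [pow_succ, mul_comm (a^k) a, mul_assoc] at ht
    exact ih _ (h _ ht)

lemma nzd_shift_pow {C : Ideal R} {y z : R} (h1 : NZDmod C y)
    (h2 : NZDmod (C ⊔ Ideal.span {y}) z) (j : ℕ) :
    NZDmod (C ⊔ Ideal.span {y ^ (j + 1)}) z := by
  induction j with
  | zero => simpa using h2
  | succ j ih =>
    intro t ht
    rw [mem_sup_span_iff] at ht
    obtain ⟨s, hs⟩ := ht
    -- z * t - y^(j+2) * s ∈ C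
    have ht1 : t ∈ C ⊔ Ideal.span {y} := by
      apply h2
      rw [mem_sup_span_iff]
      exact ⟨y ^ (j + 1) * s, by convert hs using 2; ring⟩
    rw [mem_sup_span_iff] at ht1
    obtain ⟨t₁, ht₁⟩ := ht1
    -- t - y * t₁ ∈ C
    have key : y * (z * t₁ - y ^ (j + 1) * s) ∈ C := by
      have : y * (z * t₁ - y ^ (j + 1) * s) = z * t - y ^ (j + 1 + 1) * s - z * (t - y * t₁) := by
        ring
      rw [this]
      exact C.sub_mem hs (C.mul_mem_left z ht₁)
    have h3 : z * t₁ ∈ C ⊔ Ideal.span {y ^ (j + 1)} := by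
      rw [mem_sup_span_iff]
      exact ⟨s, h1 _ key⟩
    have h4 := ih _ h3
    rw [mem_sup_span_iff] at h4 ⊢
    obtain ⟨s₁, hs₁⟩ := h4
    refine ⟨s₁, ?_⟩
    have : t - y ^ (j + 1 + 1) * s₁ = (t - y * t₁) + y * (t₁ - y ^ (j + 1) * s₁) := by ring
    rw [this]
    exact C.add_mem ht₁ (C.mul_mem_left y hs₁)

section AssPrimes

variable {M : Type*} [AddCommGroup M] [Module R M]

lemma colon_bot_singleton_eq_ann (x : M) :
    (⊥ : Submodule R M).colon {x} = (Submodule.span R {x}).annihilator := by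
  ext c
  rw [Submodule.mem_colon_singleton, Submodule.mem_bot, Submodule.mem_annihilator_span_singleton]

lemma ann_span_singleton_smul {p : Ideal R} (hp : p.IsPrime) {x : M}
    (hx : (Submodule.span R {x}).annihilator = p) {r : R} (h : r • x ≠ 0) :
    (Submodule.span R {r • x}).annihilator = p := by
  have hr : r ∉ p := by
    intro hr
    rw [← hx, Submodule.mem_annihilator_span_singleton] at hr
    exact h hr
  ext c
  rw [Submodule.mem_annihilator_span_singleton]
  constructor
  · intro hc
    have h2 : (c * r) • x = 0 := by rw [mul_smul]; exact hc
    have h3 : c * r ∈ p := by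
      rw [← hx, Submodule.mem_annihilator_span_singleton]; exact h2
    exact (hp.mem_or_mem h3).resolve_right hr
  · intro hc
    have h2 : c • x = 0 := by
      rw [← hx, Submodule.mem_annihilator_span_singleton] at hc; exact hc
    rw [smul_comm, h2, smul_zero]

lemma ass_subset_union [IsNoetherianRing R] (N₁ : Submodule R M) :
    associatedPrimes R M ⊆ associatedPrimes R N₁ ∪ associatedPrimes R (M ⧸ N₁) := by
  rintro p hpa
  obtain ⟨hp, x, hx⟩ := isAssociatedPrime_iff.1 hpa
  rw [colon_bot_singleton_eq_ann] at hx
  by_cases hcap : ∃ y ∈ (Submodule.span R {x}) ⊓ N₁, y ≠ (0 : M)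
  · left
    obtain ⟨y, hy, hy0⟩ := hcap
    obtain ⟨hy1, hy2⟩ := Submodule.mem_inf.1 hy
    obtain ⟨r, rfl⟩ := Submodule.mem_span_singleton.1 hy1
    have hann := ann_span_singleton_smul hp hx.symm hy0
    refine isAssociatedPrime_iff.2 ⟨hp, ⟨r • x, hy2⟩, ?_⟩
    rw [colon_bot_singleton_eq_ann]
    rw [← hann]
    ext c
    rw [Submodule.mem_annihilator_span_singleton, Submodule.mem_annihilator_span_singleton]
    constructor
    · intro hc
      apply Subtype.ext
      simpa using hc
    · intro hc
      have := congrArg (Subtype.val) hc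
      simpa using this
  · right
    push_neg at hcap
    refine isAssociatedPrime_iff.2 ⟨hp, Submodule.Quotient.mk x, ?_⟩
    rw [colon_bot_singleton_eq_ann]
    ext c
    rw [Submodule.mem_annihilator_span_singleton, ← Submodule.Quotient.mk_smul,
      Submodule.Quotient.mk_eq_zero]
    rw [hx, Submodule.mem_annihilator_span_singleton]
    constructor
    · intro hc; rw [hc]; exact N₁.zero_mem
    · intro hc
      exact hcap _ (Submodule.mem_inf.2
        ⟨Submodule.smul_mem _ c (Submodule.mem_span_singleton_self x), hc⟩)

end AssPrimes

section AssFin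

variable {M : Type*} [AddCommGroup M] [Module R M]

lemma ann_subtype_eq {N : Submodule R M} (w : N) :
    (Submodule.span R {w}).annihilator = (Submodule.span R {(w : M)}).annihilator := by
  ext c
  rw [Submodule.mem_annihilator_span_singleton, Submodule.mem_annihilator_span_singleton]
  constructor
  · intro hc
    have := congrArg (Subtype.val) hc
    simpa using this
  · intro hc
    apply Subtype.ext
    simpa using hc

lemma ass_cyclic [IsNoetherianRing R] {p : Ideal R} (hp : p.IsPrime) {z : M}
    (hz : (Submodule.span R {z}).annihilator = p) :
    associatedPrimes R (Submodule.span R {z}) ⊆ {p} := by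
  rintro q hqa
  obtain ⟨hq, w, hw⟩ := isAssociatedPrime_iff.1 hqa
  rw [colon_bot_singleton_eq_ann] at hw
  obtain ⟨v, hv⟩ := w
  obtain ⟨r, rfl⟩ := Submodule.mem_span_singleton.1 hv
  have hv0 : r • z ≠ 0 := by
    intro h0
    have : q = ⊤ := by
      rw [hw, eq_top_iff]
      intro c _
      rw [ann_subtype_eq, Submodule.mem_annihilator_span_singleton]
      simp only [h0, smul_zero]
    exact hq.ne_top this
  have := ann_span_singleton_smul hp hz hv0
  rw [hw, ann_subtype_eq]
  simp only [Set.mem_singleton_iff]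
  exact this

theorem assFinite [IsNoetherianRing R] [Module.Finite R M] :
    (associatedPrimes R M).Finite := by
  have main : ∀ S : Submodule R M, (associatedPrimes R (M ⧸ S)).Finite := by
    intro S
    induction S using IsNoetherian.induction with
    | _ S ih =>
      by_cases htriv : Subsingleton (M ⧸ S)
      · rw [associatedPrimes.eq_empty_of_subsingleton]
        exact Set.finite_empty
      · have : Nontrivial (M ⧸ S) := not_subsingleton_iff_nontrivial.1 htriv
        obtain ⟨x, hx⟩ := exists_ne (0 : M ⧸ S)
        obtain ⟨p, hp, -⟩ := exists_le_isAssociatedPrime_of_isNoetherianRing R x hx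
        obtain ⟨hprime, z, hz⟩ := isAssociatedPrime_iff.1 hp
        rw [colon_bot_singleton_eq_ann] at hz
        have hz0 : z ≠ 0 := by
          rintro rfl
          apply hprime.ne_top
          rw [hz, eq_top_iff]
          intro c _
          rw [Submodule.mem_annihilator_span_singleton, smul_zero]
        set N₁ : Submodule R (M ⧸ S) := Submodule.span R {z} with hN₁
        set S' : Submodule R M := N₁.comap S.mkQ with hS'
        have hlt : S < S' := by
          rw [lt_iff_le_and_ne]
          constructor
          · intro w hw
            simp only [hS', Submodule.mem_comap]
            have : S.mkQ w = 0 := (Submodule.Quotient.mk_eq_zero S).2 hw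
            rw [this]
            exact N₁.zero_mem
          · intro heq
            obtain ⟨w, hwz⟩ := Submodule.Quotient.mk_surjective S z
            have hwS : w ∈ S' := by
              simp only [hS', Submodule.mem_comap]
              show S.mkQ w ∈ N₁
              rw [show S.mkQ w = z from hwz]
              exact Submodule.mem_span_singleton_self z
            rw [← heq] at hwS
            apply hz0
            rw [← hwz]
            exact (Submodule.Quotient.mk_eq_zero S).2 hwS
        have hmap : S'.map S.mkQ = N₁ :=
          Submodule.map_comap_eq_of_surjective (Submodule.Quotient.mk_surjective S) N₁
        have e : ((M ⧸ S) ⧸ N₁) ≃ₗ[R] M ⧸ S' := by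
          rw [← hmap]
          exact Submodule.quotientQuotientEquivQuotient S S' hlt.le
        have hsub := ass_subset_union N₁
        have h1 : associatedPrimes R N₁ ⊆ {p} := ass_cyclic hprime hz.symm
        have h2 : (associatedPrimes R ((M ⧸ S) ⧸ N₁)).Finite := by
          rw [LinearEquiv.AssociatedPrimes.eq e]
          exact ih S' hlt
        exact Set.Finite.subset ((Set.finite_singleton p).union h2)
          (hsub.trans (Set.union_subset_union_left _ h1))
  have := main ⊥
  rwa [LinearEquiv.AssociatedPrimes.eq (Submodule.quotEquivOfEqBot (⊥ : Submodule R M) rfl)] at this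

end AssFin

theorem bridge [IsNoetherianRing R] {M : Type*} [AddCommGroup M] [Module R M]
    [Module.Finite R M] (K : Ideal R)
    (hzd : ∀ c ∈ K, ∃ x : M, x ≠ 0 ∧ c • x = 0) :
    ∃ x : M, x ≠ 0 ∧ ∀ c ∈ K, c • x = 0 := by
  have hfin : (associatedPrimes R M).Finite := assFinite
  have hKsub : (K : Set R) ⊆ ⋃ p ∈ associatedPrimes R M, ↑p := by
    rw [biUnion_associatedPrimes_eq_zero_divisors]
    intro c hc
    exact hzd c hc
  set s : Finset (Ideal R) := hfin.toFinset with hs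
  have hcoe : (↑s : Set (Ideal R)) = associatedPrimes R M := hfin.coe_toFinset
  have hsub2 : (K : Set R) ⊆ ⋃ p ∈ (↑s : Set (Ideal R)), (p : Set R) := by
    rw [hcoe]; exact hKsub
  have hp : ∀ p ∈ s, p ≠ (⊤ : Ideal R) → p ≠ (⊤ : Ideal R) → Ideal.IsPrime p := by
    intro p hps _ _
    have : p ∈ associatedPrimes R M := by rwa [← hcoe]
    exact this.1
  obtain ⟨p, hps, hKp⟩ := (Ideal.subset_union_prime (⊤ : Ideal R) (⊤ : Ideal R) hp).1 hsub2
  have hass : p ∈ associatedPrimes R M := by rwa [← hcoe]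
  obtain ⟨hprime, x, hx⟩ := isAssociatedPrime_iff.1 hass
  rw [colon_bot_singleton_eq_ann] at hx
  have hx0 : x ≠ 0 := by
    rintro rfl
    apply hprime.ne_top
    rw [hx, eq_top_iff]
    intro c _
    rw [Submodule.mem_annihilator_span_singleton, smul_zero]
  refine ⟨x, hx0, fun c hc => ?_⟩
  have : c ∈ p := hKp hc
  rw [hx, Submodule.mem_annihilator_span_singleton] at this
  exact this

lemma not_nzdmod_iff (D : Ideal R) (c : R) :
    ¬ NZDmod D c ↔ ∃ t, c * t ∈ D ∧ t ∉ D := by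
  rw [NZDmod]; push_neg; rfl

/-- Either some element of `K` is a nonzerodivisor mod `D`, or `K` maps a nonzero
element of `R⧸D` to zero. -/
lemma nzd_or_kills [IsNoetherianRing R] (K D : Ideal R) :
    (∃ c ∈ K, NZDmod D c) ∨ (∃ t, t ∉ D ∧ ∀ c ∈ K, c * t ∈ D) := by
  by_cases h : ∃ c ∈ K, NZDmod D c
  · exact Or.inl h
  right
  push_neg at h
  have hzd : ∀ c ∈ K, ∃ x : R ⧸ D, x ≠ 0 ∧ c • x = 0 := by
    intro c hc
    obtain ⟨t, ht1, ht2⟩ := (not_nzdmod_iff D c).1 (h c hc)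
    refine ⟨Submodule.Quotient.mk t, ?_, ?_⟩
    · rwa [ne_eq, Submodule.Quotient.mk_eq_zero]
    · rw [quot_smul_mk, Submodule.Quotient.mk_eq_zero]
      exact ht1
  obtain ⟨x, hx0, hx⟩ := bridge K hzd
  obtain ⟨t, rfl⟩ := Submodule.Quotient.mk_surjective _ x
  refine ⟨t, ?_, fun c hc => ?_⟩
  · rwa [ne_eq, Submodule.Quotient.mk_eq_zero] at hx0
  · have := hx c hc
    rwa [quot_smul_mk, Submodule.Quotient.mk_eq_zero] at this

/-- Simultaneous avoidance: find one element of `K` that is a nonzerodivisor modulo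
each of the finitely many ideals `D i`. -/
lemma simultaneous_nzd [IsNoetherianRing R] (K : Ideal R) {k : ℕ} (D : Fin k → Ideal R)
    (hex : ∀ i, ∃ e ∈ K, NZDmod (D i) e) :
    ∃ c ∈ K, ∀ i, NZDmod (D i) c := by
  by_cases h : ∃ c ∈ K, ∀ i, NZDmod (D i) c
  · exact h
  exfalso
  push_neg at h
  have hzd : ∀ c ∈ K, ∃ x : (∀ i : Fin k, R ⧸ D i), x ≠ 0 ∧ c • x = 0 := by
    intro c hc
    obtain ⟨i, hi⟩ := h c hc
    obtain ⟨t, ht1, ht2⟩ := (not_nzdmod_iff _ c).1 hi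
    refine ⟨Pi.single i (Submodule.Quotient.mk t), ?_, ?_⟩
    · intro h0
      have := congrFun h0 i
      rw [Pi.single_eq_same, Pi.zero_apply] at this
      rw [Submodule.Quotient.mk_eq_zero] at this
      exact ht2 this
    · funext j
      rcases eq_or_ne j i with rfl | hne
      · simp only [Pi.smul_apply, Pi.single_eq_same, Pi.zero_apply]
        rw [quot_smul_mk, Submodule.Quotient.mk_eq_zero]
        exact ht1
      · simp [Pi.single_eq_of_ne hne]
  obtain ⟨x, hx0, hx⟩ := bridge K hzd
  have : ∃ i, x i ≠ 0 := by
    by_contra hall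
    push_neg at hall
    exact hx0 (funext hall)
  obtain ⟨i, hxi⟩ := this
  obtain ⟨e, heK, he⟩ := hex i
  obtain ⟨t, ht⟩ := Submodule.Quotient.mk_surjective _ (x i)
  apply hxi
  rw [← ht, Submodule.Quotient.mk_eq_zero]
  apply he
  have h5 := congrFun (hx e heK) i
  rw [Pi.smul_apply, ← ht, quot_smul_mk, Pi.zero_apply] at h5
  rw [← Submodule.Quotient.mk_eq_zero]
  exact h5

/-- `K` annihilates a nonzero element of `R⧸D`. -/
def Kills (K D : Ideal R) : Prop := ∃ t, t ∉ D ∧ ∀ c ∈ K, c * t ∈ D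

lemma kills_transfer {K C : Ideal R} {a b : R} (ha : NZDmod C a) (hb : NZDmod C b)
    (hbK : b ∈ K) (h : Kills K (C ⊔ Ideal.span {a})) : Kills K (C ⊔ Ideal.span {b}) := by
  obtain ⟨w, hw, hKw⟩ := h
  have hbw := hKw b hbK
  rw [mem_sup_span_iff] at hbw
  obtain ⟨v, hv⟩ := hbw
  -- `b*w - a*v ∈ C`
  refine ⟨v, ?_, ?_⟩
  · intro hvC
    rw [mem_sup_span_iff] at hvC
    obtain ⟨v', hv'⟩ := hvC
    -- `v - b*v' ∈ C`
    apply hw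
    rw [mem_sup_span_iff]
    refine ⟨v', ?_⟩
    apply hb
    have : b * (w - a * v') = (b * w - a * v) + a * (v - b * v') := by ring
    rw [this]
    exact C.add_mem hv (C.mul_mem_left a hv')
  · intro t htK
    have htw := hKw t htK
    rw [mem_sup_span_iff] at htw
    obtain ⟨u, hu⟩ := htw
    -- `t*w - a*u ∈ C`
    rw [mem_sup_span_iff]
    refine ⟨u, ?_⟩
    apply ha
    have : a * (t * v - b * u) = b * (t * w - a * u) - t * (b * w - a * v) := by ring
    rw [this]
    exact C.sub_mem (C.mul_mem_left b hu) (C.mul_mem_left t hv)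

lemma ofList_concat (l : List R) (a : R) :
    Ideal.ofList (l ++ [a]) = Ideal.ofList l ⊔ Ideal.span {a} := by
  rw [Ideal.ofList_append, Ideal.ofList_singleton]

lemma kills_indep [IsNoetherianRing R] [IsLocalRing R] {K : Ideal R}
    (hK : K ≤ maximalIdeal R) :
    ∀ (n : ℕ) (C : Ideal R) (as bs : List R), as.length = n → bs.length = n →
      (∀ x ∈ as, x ∈ K) → (∀ x ∈ bs, x ∈ K) → WReg C as → WReg C bs →
      Kills K (C ⊔ Ideal.ofList as) → Kills K (C ⊔ Ideal.ofList bs) := by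
  intro n
  induction n with
  | zero =>
    intro C as bs ha hb _ _ _ _ hk
    rw [List.length_eq_zero_iff] at ha hb
    subst ha; subst hb
    simpa using hk
  | succ n ih =>
    intro C as bs hlena hlenb hasK hbsK hregas hregbs hk
    obtain ⟨as', a, rfl⟩ : ∃ l' x, as = l' ++ [x] := by
      rcases List.eq_nil_or_concat as with rfl | ⟨L, x, h⟩
      · simp at hlena
      · exact ⟨L, x, by simpa using h⟩
    obtain ⟨bs', b, rfl⟩ : ∃ l' x, bs = l' ++ [x] := by
      rcases List.eq_nil_or_concat bs with rfl | ⟨L, x, h⟩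
      · simp at hlenb
      · exact ⟨L, x, by simpa using h⟩
    rw [wreg_append_iff] at hregas hregbs
    obtain ⟨hregas', hrega⟩ := hregas
    obtain ⟨hregbs', hregb⟩ := hregbs
    rw [wreg_cons_iff] at hrega hregb
    have haNZD : NZDmod (C ⊔ Ideal.ofList as') a := hrega.1
    have hbNZD : NZDmod (C ⊔ Ideal.ofList bs') b := hregb.1
    have haK : a ∈ K := hasK a (by simp)
    have hbK : b ∈ K := hbsK b (by simp)
    have has'K : ∀ x ∈ as', x ∈ K := fun x hx => hasK x (by simp [hx])
    have hbs'K : ∀ x ∈ bs', x ∈ K := fun x hx => hbsK x (by simp [hx])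
    -- find c ∈ K which is NZD modulo both `C ⊔ ofList as'` and `C ⊔ ofList bs'`
    obtain ⟨c, hcK, hc⟩ := simultaneous_nzd K
      (fun i : Fin 2 => if i = 0 then C ⊔ Ideal.ofList as' else C ⊔ Ideal.ofList bs')
      (by
        intro i
        rcases eq_or_ne i 0 with rfl | hne
        · exact ⟨a, haK, by simpa using haNZD⟩
        · exact ⟨b, hbK, by simp [hne]; exact hbNZD⟩)
    have hcas : NZDmod (C ⊔ Ideal.ofList as') c := by simpa using hc 0
    have hcbs : NZDmod (C ⊔ Ideal.ofList bs') c := by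
      have := hc 1; simpa using this
    -- transfer: kills at (as' , a) → kills at (as', c)
    rw [ofList_concat, ← sup_assoc] at hk
    have hk2 : Kills K (C ⊔ Ideal.ofList as' ⊔ Ideal.span {c}) :=
      kills_transfer haNZD hcas hcK hk
    -- regularity of as' over (C ⊔ span c) and bs' over (C ⊔ span c), via permutation
    have hregasc : WReg (C ⊔ Ideal.span {c}) as' := by
      have h1 : WReg C (as' ++ [c]) := by
        rw [wreg_append_iff]
        exact ⟨hregas', (wreg_cons_iff _ _ _).2 ⟨hcas, wreg_nil _⟩⟩
      have h2 : WReg C (c :: as') := h1.perm (List.perm_append_singleton c as')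
        (by
          intro x hx
          rcases List.mem_append.1 hx with h | h
          · exact hK (has'K x h)
          · simp at h; subst h; exact hK hcK)
      exact ((wreg_cons_iff _ _ _).1 h2).2
    have hregbsc : WReg (C ⊔ Ideal.span {c}) bs' := by
      have h1 : WReg C (bs' ++ [c]) := by
        rw [wreg_append_iff]
        exact ⟨hregbs', (wreg_cons_iff _ _ _).2 ⟨hcbs, wreg_nil _⟩⟩
      have h2 : WReg C (c :: bs') := h1.perm (List.perm_append_singleton c bs')
        (by
          intro x hx
          rcases List.mem_append.1 hx with h | h
          · exact hK (hbs'K x h)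
          · simp at h; subst h; exact hK hcK)
      exact ((wreg_cons_iff _ _ _).1 h2).2
    -- apply the induction hypothesis over the base ideal C ⊔ span {c}
    have hk3 : Kills K (C ⊔ Ideal.span {c} ⊔ Ideal.ofList as') := by
      rwa [sup_right_comm] at hk2
    have hk4 := ih (C ⊔ Ideal.span {c}) as' bs' (by simpa using hlena) (by simpa using hlenb)
      has'K hbs'K hregasc hregbsc hk3
    rw [sup_right_comm] at hk4
    -- transfer back: kills at (bs', c) → kills at (bs', b)
    have hk5 : Kills K (C ⊔ Ideal.ofList bs' ⊔ Ideal.span {b}) :=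
      kills_transfer hcbs hbNZD hbK hk4
    rwa [ofList_concat, ← sup_assoc]

lemma exists_extension [IsNoetherianRing R] [IsLocalRing R] {K : Ideal R}
    (hK : K ≤ maximalIdeal R) {ys zs : List R}
    (hysK : ∀ x ∈ ys, x ∈ K) (hzsK : ∀ x ∈ zs, x ∈ K)
    (hys : WReg (⊥ : Ideal R) ys) (hzs : WReg (⊥ : Ideal R) zs)
    (hlen : zs.length < ys.length) :
    ∃ w ∈ K, WReg (⊥ : Ideal R) (zs ++ [w]) := by
  rcases nzd_or_kills K (Ideal.ofList zs) with ⟨c, hcK, hc⟩ | hkill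
  · refine ⟨c, hcK, ?_⟩
    rw [wreg_append_iff]
    refine ⟨hzs, (wreg_cons_iff _ _ _).2 ⟨by rwa [bot_sup_eq], wreg_nil _⟩⟩
  · exfalso
    set j := zs.length with hj
    have hkill' : Kills K ((⊥ : Ideal R) ⊔ Ideal.ofList zs) := by rwa [bot_sup_eq]
    have htake : (ys.take j).length = j := by
      rw [List.length_take]
      omega
    have hysplit : ys = ys.take j ++ ys.drop j := (List.take_append_drop j ys).symm
    have hregtake : WReg (⊥ : Ideal R) (ys.take j) := by
      rw [hysplit, wreg_append_iff] at hys
      exact hys.1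
    have hk2 := kills_indep hK j ⊥ zs (ys.take j) rfl htake hzsK
      (fun x hx => hysK x (List.mem_of_mem_take hx)) hzs hregtake hkill'
    rw [bot_sup_eq] at hk2
    obtain ⟨t, ht, hKt⟩ := hk2
    -- but ys[j] ∈ K is a nonzerodivisor mod ofList (ys.take j)
    have hjlt : j < ys.length := hlen
    have hdrop : ys.drop j = ys[j] :: ys.drop (j + 1) := List.drop_eq_getElem_cons hjlt
    have hynzd : NZDmod ((⊥ : Ideal R) ⊔ Ideal.ofList (ys.take j)) (ys[j]) := by
      have := hys
      rw [hysplit, wreg_append_iff] at this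
      have h2 := this.2
      rw [hdrop, wreg_cons_iff] at h2
      exact h2.1
    rw [bot_sup_eq] at hynzd
    have hyK : ys[j] ∈ K := hysK _ (List.getElem_mem hjlt)
    exact ht (hynzd t (hKt _ hyK))

lemma wreg_powers [IsNoetherianRing R] [IsLocalRing R] (T : Ideal R) :
    ∀ (l : List R) (C : Ideal R), WReg C l → (∀ x ∈ l, x ∈ maximalIdeal R) →
      (∀ x ∈ l, ∃ k : ℕ, x ^ (k + 1) ∈ T) →
      ∃ l' : List R, l'.length = l.length ∧ WReg C l' ∧ (∀ y ∈ l', y ∈ T) ∧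
        (∀ x ∈ l, ∃ k : ℕ, x ^ (k + 1) ∈ Ideal.ofList l') := by
  intro l
  induction l with
  | nil => exact fun C _ _ _ => ⟨[], rfl, wreg_nil _, by simp, by simp⟩
  | cons a rest ih =>
    intro C hreg hmem hpow
    have hrestm : ∀ x ∈ rest, x ∈ maximalIdeal R := fun x hx => hmem x (by simp [hx])
    have ham : a ∈ maximalIdeal R := hmem a (by simp)
    obtain ⟨k, hk⟩ := hpow a (by simp)
    -- permute a to the end
    have h1 : WReg C (rest ++ [a]) := hreg.perm
      (List.perm_append_singleton a rest).symm
      (by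
        intro x hx
        rcases List.mem_cons.1 hx with rfl | h
        · exact ham
        · exact hrestm x h)
    rw [wreg_append_iff] at h1
    obtain ⟨hrest, ha⟩ := h1
    rw [wreg_cons_iff] at ha
    have hapow : NZDmod (C ⊔ Ideal.ofList rest) (a ^ (k + 1)) := ha.1.pow (k + 1)
    have h2 : WReg C (rest ++ [a ^ (k + 1)]) := by
      rw [wreg_append_iff]
      exact ⟨hrest, (wreg_cons_iff _ _ _).2 ⟨hapow, wreg_nil _⟩⟩
    have h3 : WReg C (a ^ (k + 1) :: rest) := h2.perm
      (List.perm_append_singleton (a ^ (k + 1)) rest)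
      (by
        intro x hx
        rcases List.mem_append.1 hx with h | h
        · exact hrestm x h
        · simp at h; subst h
          exact Ideal.pow_mem_of_mem _ ham _ (Nat.succ_pos k))
    rw [wreg_cons_iff] at h3
    obtain ⟨hanzd, hrest'⟩ := h3
    obtain ⟨l', hlen, hregl', hl'T, hl'pow⟩ := ih (C ⊔ Ideal.span {a ^ (k + 1)}) hrest'
      hrestm (fun x hx => hpow x (by simp [hx]))
    refine ⟨a ^ (k + 1) :: l', by simp [hlen], ?_, ?_, ?_⟩
    · rw [wreg_cons_iff]
      exact ⟨hanzd, hregl'⟩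
    · intro y hy
      rcases List.mem_cons.1 hy with rfl | h
      · exact hk
      · exact hl'T y h
    · intro x hx
      rcases List.mem_cons.1 hx with rfl | h
      · refine ⟨k, ?_⟩
        rw [Ideal.ofList_cons]
        exact Ideal.mem_sup_left (Ideal.subset_span rfl)
      · obtain ⟨k', hk'⟩ := hl'pow x h
        refine ⟨k', ?_⟩
        rw [Ideal.ofList_cons]
        exact Ideal.mem_sup_right hk'

lemma add_pow_mem_sup_pow (I J : Ideal R) {i j : R} (hi : i ∈ I) (hj : j ∈ J) (n : ℕ) :
    (i + j) ^ (2 * n) ∈ I ^ n ⊔ J ^ n := by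
  rw [add_pow]
  apply Submodule.sum_mem
  intro k hk
  rw [Finset.mem_range] at hk
  by_cases hkn : n ≤ k
  · apply Ideal.mem_sup_left
    have h1 : i ^ k ∈ I ^ n := by
      have : i ^ k = i ^ n * i ^ (k - n) := by rw [← pow_add]; congr 1; omega
      rw [this]
      exact Ideal.mul_mem_right _ _ (Ideal.pow_mem_pow hi n)
    exact Ideal.mul_mem_right _ _ (Ideal.mul_mem_right _ _ h1)
  · apply Ideal.mem_sup_right
    have h1 : j ^ (2 * n - k) ∈ J ^ n := by
      have : j ^ (2 * n - k) = j ^ n * j ^ (2 * n - k - n) := by rw [← pow_add]; congr 1; omega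
      rw [this]
      exact Ideal.mul_mem_right _ _ (Ideal.pow_mem_pow hj n)
    have heq : i ^ k * j ^ (2 * n - k) * ((2 * n).choose k : R) =
        i ^ k * ((2 * n).choose k : R) * j ^ (2 * n - k) := by ring
    rw [heq]
    exact Ideal.mul_mem_left _ _ h1

lemma final_contradiction [IsNoetherianRing R] [IsLocalRing R] (I J C : Ideal R)
    (hIJrad : I ⊓ J ≤ C.radical) (hInot : ¬ I ≤ C.radical) (hJnot : ¬ J ≤ C.radical)
    {w₁ w₂ : R} (hw₁ : w₁ ∈ I ⊔ J) (hw₂ : w₂ ∈ I ⊔ J)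
    (hreg : WReg C [w₁, w₂]) : False := by
  obtain ⟨n₀, hn₀⟩ := Ideal.exists_pow_le_of_le_radical_of_fg hIJrad (IsNoetherian.noetherian _)
  set n := n₀ + 1 with hn
  have hIJn : (I ⊓ J) ^ n ≤ C := le_trans (Ideal.pow_le_pow_right (by omega)) hn₀
  have hInJn : I ^ n * J ^ n ≤ C := by
    rw [← mul_pow]
    exact le_trans (Ideal.pow_right_mono Ideal.mul_le_inf n) hIJn
  set A : Ideal R := Submodule.colon C ((J ^ n : Ideal R) : Set R) with hA
  set B : Ideal R := Submodule.colon C A with hB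
  have hIA : I ^ n ≤ A := by
    intro t ht
    rw [Submodule.mem_colon]
    intro p hp
    rw [smul_eq_mul]
    exact hInJn (Ideal.mul_mem_mul ht hp)
  have hJB : J ^ n ≤ B := by
    intro t ht
    rw [Submodule.mem_colon]
    intro a ha
    rw [smul_eq_mul, mul_comm]
    have := Submodule.mem_colon.1 ha t ht
    rwa [smul_eq_mul] at this
  have hCA : C ≤ A := by
    intro c hc
    rw [Submodule.mem_colon]
    intro p _
    rw [smul_eq_mul]
    exact Ideal.mul_mem_right p C hc
  have hAB : ∀ a ∈ A, ∀ b ∈ B, a * b ∈ C := by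
    intro a ha b hb
    have := Submodule.mem_colon.1 hb a ha
    rwa [smul_eq_mul, mul_comm] at this
  have hColB : ∀ t : R, (∀ b ∈ B, t * b ∈ C) → t ∈ A := by
    intro t ht
    rw [Submodule.mem_colon]
    intro p hp
    rw [smul_eq_mul]
    exact ht p (hJB hp)
  -- regularity facts
  rw [wreg_cons_iff] at hreg
  obtain ⟨h1, hreg2⟩ := hreg
  rw [wreg_cons_iff] at hreg2
  obtain ⟨h2, -⟩ := hreg2
  set y := w₁ ^ (2 * n) with hy_def
  set z := w₂ ^ (2 * n) with hz_def
  have hy : NZDmod C y := h1.pow (2 * n)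
  have hz : NZDmod (C ⊔ Ideal.span {y}) z := by
    have hshift := nzd_shift_pow h1 h2 (2 * n₀ + 1)
    have he : 2 * n₀ + 1 + 1 = 2 * n := by omega
    rw [he] at hshift
    exact hshift.pow (2 * n)
  -- decompose powers of w₁, w₂ in A ⊔ B
  obtain ⟨i₁, hi₁, j₁, hj₁, hw₁d⟩ := Submodule.mem_sup.1 hw₁
  obtain ⟨i₂, hi₂, j₂, hj₂, hw₂d⟩ := Submodule.mem_sup.1 hw₂
  have hyAB : y ∈ A ⊔ B := by
    have := add_pow_mem_sup_pow I J hi₁ hj₁ n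
    rw [hw₁d] at this
    exact sup_le_sup hIA hJB this
  have hzAB : z ∈ A ⊔ B := by
    have := add_pow_mem_sup_pow I J hi₂ hj₂ n
    rw [hw₂d] at this
    exact sup_le_sup hIA hJB this
  obtain ⟨α, hα, β, hβ, hyd⟩ := Submodule.mem_sup.1 hyAB
  obtain ⟨γ, hγ, δ, hδ, hzd⟩ := Submodule.mem_sup.1 hzAB
  -- z·α ≡ y·γ mod C
  have hza : z * α - y * γ ∈ C := by
    have heq : z * α - y * γ = α * δ - γ * β := by rw [← hyd, ← hzd]; ring
    rw [heq]
    exact C.sub_mem (hAB α hα δ hδ) (hAB γ hγ β hβ)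
  have hαy : α ∈ C ⊔ Ideal.span {y} := by
    apply hz
    rw [mem_sup_span_iff]
    exact ⟨γ, hza⟩
  rw [mem_sup_span_iff] at hαy
  obtain ⟨t, htc⟩ := hαy
  have htA : t ∈ A := by
    apply hColB
    intro b hb
    apply hy
    have heq : y * (t * b) = α * b - (α - y * t) * b := by ring
    rw [heq]
    exact C.sub_mem (hAB α hα b hb) (Ideal.mul_mem_right b C htc)
  -- z·β ≡ y·δ mod C
  have hzb : z * β - y * δ ∈ C := by
    have heq : z * β - y * δ = γ * β - α * δ := by rw [← hyd, ← hzd]; ring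
    rw [heq]
    exact C.sub_mem (hAB γ hγ β hβ) (hAB α hα δ hδ)
  have hβy : β ∈ C ⊔ Ideal.span {y} := by
    apply hz
    rw [mem_sup_span_iff]
    exact ⟨δ, hzb⟩
  rw [mem_sup_span_iff] at hβy
  obtain ⟨s, hsc⟩ := hβy
  have hsB : s ∈ B := by
    rw [Submodule.mem_colon]
    intro a ha
    rw [smul_eq_mul]
    apply hy
    have heq : y * (s * a) = β * a - (β - y * s) * a := by ring
    rw [heq]
    have hba : β * a ∈ C := by rw [mul_comm]; exact hAB a ha β hβ
    exact C.sub_mem hba (Ideal.mul_mem_right a C hsc)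
  have h1ts : (1 : R) - t - s ∈ C := by
    apply hy
    have heq : y * (1 - t - s) = (α - y * t) + (β - y * s) := by rw [← hyd]; ring
    rw [heq]
    exact C.add_mem htc hsc
  have h1sA : (1 : R) - s ∈ A := by
    have heq : (1 : R) - s = t + (1 - t - s) := by ring
    rw [heq]
    exact A.add_mem htA (hCA h1ts)
  rcases IsLocalRing.isUnit_or_isUnit_one_sub_self s with hu | hu
  · -- s unit: A ≤ C, so I ≤ radical C
    apply hInot
    intro x hx
    have hxn : x ^ n ∈ A := hIA (Ideal.pow_mem_pow hx n)
    have hsx : x ^ n * s ∈ C := hAB _ hxn s hsB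
    obtain ⟨u, rfl⟩ := hu
    refine ⟨n, ?_⟩
    have : x ^ n = (↑u⁻¹ : R) * (x ^ n * u) := by
      rw [← mul_assoc, mul_comm ((↑u⁻¹ : R)) (x^n), mul_assoc]
      simp
    rw [this]
    exact Ideal.mul_mem_left _ _ hsx
  · -- 1 - s unit: B ≤ C, so J ≤ radical C
    apply hJnot
    intro x hx
    have hxn : x ^ n ∈ B := hJB (Ideal.pow_mem_pow hx n)
    have hsx : (1 - s) * x ^ n ∈ C := hAB _ h1sA _ hxn
    obtain ⟨u, hu'⟩ := hu
    refine ⟨n, ?_⟩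
    have : x ^ n = (↑u⁻¹ : R) * ((1 - s) * x ^ n) := by
      rw [← hu', ← mul_assoc]
      simp
    rw [this]
    exact Ideal.mul_mem_left _ _ hsx

/-- Core: no weakly regular sequence of length `h+2` inside `I ⊔ J`. -/
lemma core_contradiction [IsNoetherianRing R] [IsLocalRing R]
    (I J : Ideal R) (hI : I ≠ ⊤) (hJ : J ≠ ⊤)
    (xs : List R) (hreg : IsWeaklyRegular R xs)
    (hmeet : (I ⊓ J).radical = (Ideal.ofList xs).radical)
    (hIr : I.radical ≠ (Ideal.ofList xs).radical)
    (hJr : J.radical ≠ (Ideal.ofList xs).radical)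
    (ws : List R) (hwslen : ws.length = xs.length + 2)
    (hwsK : ∀ x ∈ ws, x ∈ I ⊔ J) (hwsreg : IsWeaklyRegular R ws) : False := by
  set K := I ⊔ J with hK
  have hKm : K ≤ maximalIdeal R :=
    sup_le (IsLocalRing.le_maximalIdeal hI) (IsLocalRing.le_maximalIdeal hJ)
  have hxsX : ∀ x ∈ xs, x ∈ Ideal.ofList xs := by
    intro x hx
    exact Ideal.subset_span hx
  have hxsrad : ∀ x ∈ xs, x ∈ (I ⊓ J).radical := by
    intro x hx
    rw [hmeet]
    exact Ideal.le_radical (hxsX x hx)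
  have hxsm : ∀ x ∈ xs, x ∈ maximalIdeal R := by
    intro x hx
    have h1 : x ∈ I.radical := Ideal.radical_mono inf_le_left (hxsrad x hx)
    have h2 : I.radical ≠ ⊤ := fun ht => hI (Ideal.radical_eq_top.1 ht)
    exact IsLocalRing.le_maximalIdeal h2 h1
  have hpow : ∀ x ∈ xs, ∃ k : ℕ, x ^ (k + 1) ∈ I ⊓ J := by
    intro x hx
    obtain ⟨m, hm⟩ := hxsrad x hx
    exact ⟨m, by rw [pow_succ]; exact Ideal.mul_mem_right _ _ hm⟩
  obtain ⟨xs', hlen', hreg', hxs'T, hxs'pow⟩ :=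
    wreg_powers (I ⊓ J) xs ⊥ ((wreg_bot_iff xs).2 hreg) hxsm hpow
  set C := Ideal.ofList xs' with hC
  -- radical comparisons
  have hXleC : Ideal.ofList xs ≤ C.radical := by
    apply Ideal.span_le.2
    intro x hx
    obtain ⟨k, hk⟩ := hxs'pow x hx
    exact ⟨k + 1, hk⟩
  have hCle : C ≤ I ⊓ J := Ideal.span_le.2 (fun x hx => hxs'T x hx)
  have hIJrad : I ⊓ J ≤ C.radical := by
    intro x hx
    have h1 : x ∈ (I ⊓ J).radical := Ideal.le_radical hx
    rw [hmeet] at h1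
    have h2 : (Ideal.ofList xs).radical ≤ C.radical := by
      rw [← Ideal.radical_idem C]
      exact Ideal.radical_mono hXleC
    exact h2 h1
  have hCradle : C.radical ≤ (Ideal.ofList xs).radical := by
    rw [← hmeet]
    exact Ideal.radical_mono hCle
  have hInot : ¬ I ≤ C.radical := by
    intro hle
    apply hIr
    apply le_antisymm
    · have h3 : I.radical ≤ C.radical.radical := Ideal.radical_mono hle
      rw [Ideal.radical_idem] at h3
      exact h3.trans hCradle
    · rw [← hmeet]
      exact Ideal.radical_mono inf_le_left
  have hJnot : ¬ J ≤ C.radical := by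
    intro hle
    apply hJr
    apply le_antisymm
    · have h3 : J.radical ≤ C.radical.radical := Ideal.radical_mono hle
      rw [Ideal.radical_idem] at h3
      exact h3.trans hCradle
    · rw [← hmeet]
      exact Ideal.radical_mono inf_le_right
  -- extend xs' by two elements of K
  have hxs'K : ∀ x ∈ xs', x ∈ K := fun x hx => (le_sup_left : I ≤ K) (hxs'T x hx).1
  have hwsbot : WReg (⊥ : Ideal R) ws := (wreg_bot_iff ws).2 hwsreg
  obtain ⟨w₁, hw₁K, hreg1⟩ := exists_extension hKm hwsK hxs'K hwsbot hreg'
    (by rw [hlen', hwslen]; omega)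
  have hl1 : ∀ x ∈ xs' ++ [w₁], x ∈ K := by
    intro x hx
    rcases List.mem_append.1 hx with hx | hx
    · exact hxs'K x hx
    · simp at hx; subst hx; exact hw₁K
  obtain ⟨w₂, hw₂K, hreg2⟩ := exists_extension hKm hwsK hl1 hwsbot hreg1
    (by rw [List.length_append, hlen', hwslen]; simp)
  rw [List.append_assoc] at hreg2
  have hreg3 : WReg (⊥ ⊔ C) ([w₁] ++ [w₂]) := ((wreg_append_iff _ _ _).1 hreg2).2
  rw [bot_sup_eq] at hreg3
  exact final_contradiction I J C hIJrad hInot hJnot hw₁K hw₂K hreg3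


end Aux

/-- If `√(I ∩ J) = √(x₁,…,x_h)` for a regular sequence `x₁,…,x_h` in a Noetherian
local ring, but `√I, √J ≠ √(x₁,…,x_h)`, then `depth(I + J, R) ≤ h + 1`. -/
theorem depth_sup_le_of_radical_inf_eq_radical_regular_sequence
    {R : Type u} [CommRing R] [IsNoetherianRing R] [IsLocalRing R]
    (I J : Ideal R) (hI : I ≠ ⊤) (hJ : J ≠ ⊤)
    (xs : List R) (h : ℕ) (hlen : xs.length = h)
    (hreg : RingTheory.Sequence.IsRegular R xs)
    (hmeet : (I ⊓ J).radical = (Ideal.ofList xs).radical)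
    (hIr : I.radical ≠ (Ideal.ofList xs).radical)
    (hJr : J.radical ≠ (Ideal.ofList xs).radical) :
    (I ⊔ J).depthENat R ≤ (h : ℕ∞) + 1 := by
  have hKm : I ⊔ J ≤ IsLocalRing.maximalIdeal R :=
    sup_le (IsLocalRing.le_maximalIdeal hI) (IsLocalRing.le_maximalIdeal hJ)
  have hKtop : I ⊔ J ≠ ⊤ := by
    intro ht
    rw [ht] at hKm
    exact (IsLocalRing.maximalIdeal.isMaximal R).ne_top (eq_top_iff.2 hKm)
  rw [Ideal.depthENat, if_neg (by
    rw [smul_eq_mul, Ideal.mul_top]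
    exact hKtop)]
  apply sSup_le
  rintro n ⟨rs, hrsK, hrsreg, rfl⟩
  have hcast : (h : ℕ∞) + 1 = ((h + 1 : ℕ) : ℕ∞) := by push_cast; ring
  rw [hcast, Nat.cast_le]
  by_contra hgt
  push_neg at hgt
  have htakelen : (rs.take (h + 2)).length = xs.length + 2 := by
    rw [List.length_take, hlen]
    omega
  have htakeK : ∀ x ∈ rs.take (h + 2), x ∈ I ⊔ J :=
    fun x hx => hrsK x (List.mem_of_mem_take hx)
  have htakereg : RingTheory.Sequence.IsWeaklyRegular R (rs.take (h + 2)) := by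
    have h1 := hrsreg.toIsWeaklyRegular
    rw [← List.take_append_drop (h + 2) rs] at h1
    exact ((RingTheory.Sequence.isWeaklyRegular_append_iff _ _ _).1 h1).1
  exact core_contradiction I J hI hJ xs hreg.toIsWeaklyRegular hmeet hIr hJr
    (rs.take (h + 2)) htakelen htakeK htakereg
end
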